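/- arXiv:math/9604201 — 2 statements merged into one kernel-verified Lean document; each statement's English description precedes it below -/
import Mathlib

section
/- Let M be a real hypersurface in ℂⁿ with defining function ρ, and φ an analytic disc attached to M such that ρ_{z₁}[φ(σ)] ≠ 0 for all σ on the unit circle. If s is the winding number of σ ↦ ρ_{z₁}[φ(σ)], then the defect of φ satisfies d(φ) ≤ max(0, 2s+1). -/
open Complex Metric
open scoped NNReal

/-- The Wirtinger derivative `ρ_{z_j} = (∂ρ/∂x_j − i ∂ρ/∂y_j)/2` of a real-valued
function of `n` complex variables. -/
noncomputable def wirt {n : ℕ} (ρ : (Fin n → ℂ) → ℝ) (p : Fin n → ℂ) (j : Fin n) : ℂ :=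
  ((fderiv ℝ ρ p (Pi.single j 1) : ℝ) -
    Complex.I * (fderiv ℝ ρ p (Pi.single j Complex.I) : ℝ)) / 2

/-- A function on the unit circle is of class `C^{1,δ}`. -/
def C1HolderCircle (δ : ℝ≥0) {E : Type*} [NormedAddCommGroup E] [NormedSpace ℝ E]
    (g : ℂ → E) : Prop :=
  ContDiff ℝ 1 (fun θ : ℝ => g (Complex.exp (θ * Complex.I))) ∧
  ∃ C, HolderWith C δ (deriv (fun θ : ℝ => g (Complex.exp (θ * Complex.I))))

/-- A function on the closed unit disc is of class `C^{1,δ}` up to the boundary. -/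
def C1HolderDisc (δ : ℝ≥0) {E : Type*} [NormedAddCommGroup E] [NormedSpace ℝ E]
    (f : ℂ → E) : Prop :=
  ContDiffOn ℝ 1 f (closedBall 0 1) ∧
  ∃ C, HolderOnWith C δ (fderivWithin ℝ f (closedBall 0 1)) (closedBall 0 1)

set_option synthInstance.maxHeartbeats 1000000
set_option maxHeartbeats 4000000
set_option linter.unusedVariables false

namespace Stmt16Aux
open Set
open scoped Real

lemma sphere_ne_zero {σ : ℂ} (h : σ ∈ sphere (0:ℂ) 1) : σ ≠ 0 := by
  rw [mem_sphere_zero_iff_norm] at h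
  intro h0; rw [h0] at h; simp at h


lemma exists_theta {σ : ℂ} (h : σ ∈ sphere (0:ℂ) 1) : ∃ θ : ℝ, circleMap 0 1 θ = σ := by
  refine ⟨Complex.arg σ, ?_⟩
  have habs : ‖σ‖ = 1 := by rwa [mem_sphere_zero_iff_norm] at h
  have := Complex.norm_mul_exp_arg_mul_I σ
  rw [habs] at this
  simpa [circleMap] using this


lemma conj_sphere {σ : ℂ} (h : σ ∈ sphere (0:ℂ) 1) : (starRingEnd ℂ) σ = σ⁻¹ := by
  have habs : ‖σ‖ = 1 := by rwa [mem_sphere_zero_iff_norm] at h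
  have h1 : σ * (starRingEnd ℂ) σ = 1 := by
    rw [Complex.mul_conj]
    norm_cast
    rw [Complex.normSq_eq_norm_sq, habs]; norm_num
  field_simp [sphere_ne_zero h] at h1 ⊢
  rw [← h1]


/-- A continuous nonnegative periodic function with zero integral over a period vanishes. -/
lemma zero_of_integral_zero {w : ℝ → ℝ} (hw : Continuous w) (hnn : ∀ θ, 0 ≤ w θ)
    (hper : Function.Periodic w (2*π)) (hint : (∫ θ in (0:ℝ)..(2*π), w θ) = 0) :
    ∀ θ, w θ = 0 := by
  intro θ₀
  have h2π : (0:ℝ) < 2*π := by positivity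
  set a := θ₀ - π with ha
  set b := θ₀ + π with hb
  have hab : b = a + 2*π := by rw [ha, hb]; ring
  have hint' : (∫ θ in a..b, w θ) = 0 := by
    rw [hab, hper.intervalIntegral_add_eq a 0]
    simpa using hint
  set F : ℝ → ℝ := fun x => ∫ t in a..x, w t with hF
  have hFzero : ∀ x ∈ Ioo a b, F x = 0 := by
    intro x hx
    have h1 : 0 ≤ F x := intervalIntegral.integral_nonneg hx.1.le (fun t _ => hnn t)
    have hsplit : F x + (∫ t in x..b, w t) = ∫ t in a..b, w t :=
      intervalIntegral.integral_add_adjacent_intervals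
        (hw.intervalIntegrable a x) (hw.intervalIntegrable x b)
    have h2 : 0 ≤ ∫ t in x..b, w t :=
      intervalIntegral.integral_nonneg hx.2.le (fun t _ => hnn t)
    have : F x ≤ 0 := by
      have := hsplit.symm ▸ hint'  -- (∫ a..b) = 0
      linarith [hsplit, hint']
    linarith
  have hmem : θ₀ ∈ Ioo a b := by
    constructor
    · simp only [ha]; nlinarith [Real.pi_pos]
    · simp only [hb]; nlinarith [Real.pi_pos]
  have hEq : F =ᶠ[nhds θ₀] (fun _ => (0:ℝ)) := by
    filter_upwards [Ioo_mem_nhds hmem.1 hmem.2] with x hx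
    exact hFzero x hx
  have hd1 : deriv F θ₀ = w θ₀ := Continuous.deriv_integral w hw a θ₀
  have hd2 : deriv F θ₀ = 0 := by
    rw [Filter.EventuallyEq.deriv_eq hEq]; simp
  rw [← hd1, hd2]


/-- Mean value property from the Cauchy integral formula. -/
lemma meanvalue {g : ℂ → ℂ} (hc : ContinuousOn g (closedBall 0 1))
    (hd : DifferentiableOn ℂ g (ball 0 1)) :
    (∫ θ in (0:ℝ)..(2*π), g (circleMap 0 1 θ)) = (2*π) * g 0 := by
  have hdc : DiffContOnCl ℂ g (ball (0:ℂ) 1) :=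
    ⟨hd, by rwa [closure_ball (0:ℂ) one_ne_zero]⟩
  have h0 : (0:ℂ) ∈ ball (0:ℂ) 1 := by simp
  have hcau := hdc.circleIntegral_sub_inv_smul h0
  have hInt : (∮ z in C(0, 1), (z - 0)⁻¹ • g z)
      = I * ∫ θ in (0:ℝ)..(2*π), g (circleMap 0 1 θ) := by
    rw [circleIntegral]
    rw [← intervalIntegral.integral_const_mul]
    apply intervalIntegral.integral_congr
    intro θ _
    have hne : circleMap 0 1 θ ≠ 0 := circleMap_ne_center one_ne_zero
    show deriv (circleMap 0 1) θ • (circleMap 0 1 θ - 0)⁻¹ • g (circleMap 0 1 θ)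
        = I * g (circleMap 0 1 θ)
    rw [deriv_circleMap]
    rw [smul_eq_mul, smul_eq_mul, sub_zero]
    field_simp
  rw [hInt] at hcau
  have : I * ∫ θ in (0:ℝ)..(2*π), g (circleMap 0 1 θ) = I * ((2*π) * g 0) := by
    rw [hcau]; simp [smul_eq_mul]; ring
  exact mul_left_cancel₀ I_ne_zero this


lemma circleIntegral_add {f g : ℂ → ℂ} (hf : CircleIntegrable f 0 1)
    (hg : CircleIntegrable g 0 1) :
    (∮ z in C(0,1), (f z + g z)) = (∮ z in C(0,1), f z) + ∮ z in C(0,1), g z := by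
  simp only [circleIntegral, smul_add, intervalIntegral.integral_add hf.out hg.out]


/-- One division step: dividing a holomorphic function vanishing at `0` by `z`. -/
lemma dslope_step {g : ℂ → ℂ} (hc : ContinuousOn g (closedBall 0 1))
    (hd : DifferentiableOn ℂ g (ball 0 1)) (h0 : g 0 = 0) :
    ContinuousOn (dslope g 0) (closedBall 0 1) ∧
    DifferentiableOn ℂ (dslope g 0) (ball 0 1) ∧
    ∀ σ ∈ sphere (0:ℂ) 1, dslope g 0 σ = σ⁻¹ * g σ := by
  have h0mem : (0:ℂ) ∈ ball (0:ℂ) 1 := by simp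
  have han : AnalyticAt ℂ g 0 := hd.analyticAt (isOpen_ball.mem_nhds h0mem)
  obtain ⟨p, hp⟩ := han
  have hd0 : DifferentiableAt ℂ (dslope g 0) 0 :=
    (hp.has_fpower_series_dslope_fslope).analyticAt.differentiableAt
  have hdiff : DifferentiableOn ℂ (dslope g 0) (ball 0 1) := by
    intro z hz
    rcases eq_or_ne z 0 with rfl | hne
    · exact hd0.differentiableWithinAt
    · exact (differentiableWithinAt_dslope_of_ne hne).mpr (hd z hz)
  refine ⟨?_, hdiff, ?_⟩
  · intro z hz
    rcases eq_or_ne z 0 with rfl | hne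
    · have : ContinuousAt (dslope g 0) 0 := by
        rw [continuousAt_dslope_same]
        exact (hd 0 h0mem).differentiableAt (isOpen_ball.mem_nhds h0mem)
      exact this.continuousWithinAt
    · exact (continuousWithinAt_dslope_of_ne hne).mpr (hc z hz)
  · intro σ hσ
    have hne := sphere_ne_zero hσ
    rw [dslope_of_ne g hne, slope_def_field, h0, sub_zero, sub_zero, div_eq_inv_mul]


/-- The value of a holomorphic `h` at `0` from its boundary values `σ⁻ʲ b σ`. -/
lemma coeff_eq {b h : ℂ → ℂ} {j : ℕ}
    (hc : ContinuousOn h (closedBall 0 1)) (hd : DifferentiableOn ℂ h (ball 0 1))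
    (hb : ∀ σ ∈ sphere (0:ℂ) 1, h σ = (σ^j)⁻¹ * b σ) :
    h 0 = (2*π*I : ℂ)⁻¹ * ∮ z in C(0,1), (z^(j+1))⁻¹ • b z := by
  have hdc : DiffContOnCl ℂ h (ball (0:ℂ) 1) :=
    ⟨hd, by rwa [closure_ball (0:ℂ) one_ne_zero]⟩
  have h0mem : (0:ℂ) ∈ ball (0:ℂ) 1 := by simp
  have hcau := hdc.circleIntegral_sub_inv_smul h0mem
  have hEq : (∮ z in C(0,1), (z - 0)⁻¹ • h z) = ∮ z in C(0,1), (z^(j+1))⁻¹ • b z := by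
    apply circleIntegral.integral_congr zero_le_one
    intro σ hσ
    have hne := sphere_ne_zero hσ
    show (σ - 0)⁻¹ • h σ = (σ^(j+1))⁻¹ • b σ
    rw [sub_zero, hb σ hσ, smul_eq_mul, smul_eq_mul, pow_succ, mul_inv]
    ring
  rw [hEq] at hcau
  rw [hcau, smul_eq_mul, ← mul_assoc, inv_mul_cancel₀, one_mul]
  simp [Real.pi_ne_zero, I_ne_zero]


/-- Iterated division by `z`, producing the index reduction. -/
lemma exists_iterate {b g : ℂ → ℂ}
    (hc : ContinuousOn g (closedBall 0 1)) (hd : DifferentiableOn ℂ g (ball 0 1))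
    (hbg : ∀ σ ∈ sphere (0:ℂ) 1, g σ = b σ) (m : ℕ)
    (hvan : ∀ j : ℕ, j < m → (2*π*I:ℂ)⁻¹ * (∮ z in C(0,1), (z^(j+1))⁻¹ • b z) = 0) :
    ∃ h : ℂ → ℂ, ContinuousOn h (closedBall 0 1) ∧ DifferentiableOn ℂ h (ball 0 1) ∧
      (∀ σ ∈ sphere (0:ℂ) 1, h σ = (σ^m)⁻¹ * g σ) ∧
      h 0 = (2*π*I:ℂ)⁻¹ * (∮ z in C(0,1), (z^(m+1))⁻¹ • b z) := by
  induction m with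
  | zero =>
    refine ⟨g, hc, hd, ?_, ?_⟩
    · intro σ hσ; rw [pow_zero, inv_one, one_mul]
    · exact coeff_eq hc hd (fun σ hσ => by rw [pow_zero, inv_one, one_mul]; exact hbg σ hσ)
  | succ m ih =>
    obtain ⟨h, h1, h2, h3, h4⟩ := ih (fun j hj => hvan j (Nat.lt_succ_of_lt hj))
    have hh0 : h 0 = 0 := by rw [h4]; exact hvan m (Nat.lt_succ_self m)
    obtain ⟨k1, k2, k3⟩ := dslope_step h1 h2 hh0
    have hbd : ∀ σ ∈ sphere (0:ℂ) 1, dslope h 0 σ = (σ^(m+1))⁻¹ * g σ := by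
      intro σ hσ
      have hne := sphere_ne_zero hσ
      rw [k3 σ hσ, h3 σ hσ, pow_succ, mul_inv]
      ring
    refine ⟨dslope h 0, k1, k2, hbd, ?_⟩
    exact coeff_eq k1 k2 (fun σ hσ => by rw [hbd σ hσ, hbg σ hσ])


/-- Laurent-type approximation together with the holomorphic correction factor `E`. -/
lemma exists_E {u : ℂ → ℂ} (hu : ContinuousOn u (sphere (0:ℂ) 1)) {η : ℝ} (hη : 0 < η) :
    ∃ E : ℂ → ℂ, Differentiable ℂ E ∧ (∀ z, E z ≠ 0) ∧
      ∀ σ ∈ sphere (0:ℂ) 1, ∃ p θ : ℝ, 0 < p ∧ |θ| ≤ η ∧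
        E σ * Complex.exp (u σ) = (p:ℂ) * Complex.exp (θ * I) := by
  classical
  haveI : CompactSpace ↥(sphere (0:ℂ) 1) :=
    isCompact_iff_compactSpace.mp (isCompact_sphere (0:ℂ) 1)
  set X := ↥(sphere (0:ℂ) 1)
  -- the coordinate function
  set ι : C(X, ℂ) := ⟨fun σ => (σ : ℂ), continuous_subtype_val⟩ with hι
  set A : StarSubalgebra ℂ C(X, ℂ) := StarAlgebra.adjoin ℂ ({ι} : Set C(X, ℂ)) with hA
  have hsep : A.SeparatesPoints := by
    intro x y hxy
    refine ⟨(fun f : C(X, ℂ) => (f : X → ℂ)) ι, ⟨ι, ?_, rfl⟩, ?_⟩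
    · exact StarAlgebra.subset_adjoin ℂ _ (Set.mem_singleton ι)
    · simpa [hι] using fun h => hxy (Subtype.ext h)
  have hdense := ContinuousMap.starSubalgebra_topologicalClosure_eq_top_of_separatesPoints A hsep
  set ub : C(X, ℂ) := ⟨fun σ => u σ, hu.restrict⟩ with hub
  have hub_mem : ub ∈ closure (A : Set C(X, ℂ)) := by
    rw [← StarSubalgebra.topologicalClosure_coe, hdense]; trivial
  obtain ⟨q, hqA, hq_dist⟩ := Metric.mem_closure_iff.mp hub_mem η hη
  -- every element of A is a `ℤ`-Laurent combination of powers on the sphere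
  set χ : ℤ → C(X, ℂ) := fun m =>
    ⟨fun σ => (σ : ℂ) ^ m,
      Continuous.zpow₀ continuous_subtype_val m (fun σ => Or.inl (sphere_ne_zero σ.2))⟩ with hχ
  set L : Submodule ℂ C(X, ℂ) := Submodule.span ℂ (Set.range χ) with hL
  have hχ_mul : ∀ a b : ℤ, χ a * χ b = χ (a + b) := by
    intro a b; ext σ
    exact (zpow_add₀ (sphere_ne_zero σ.2) a b).symm
  have hLmul : ∀ x ∈ L, ∀ y ∈ L, x * y ∈ L := by
    intro x hx
    refine Submodule.span_induction ?_ ?_ ?_ ?_ hx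
    · rintro x ⟨a, rfl⟩ y hy
      refine Submodule.span_induction ?_ ?_ ?_ ?_ hy
      · rintro y ⟨b, rfl⟩
        rw [hχ_mul]; exact Submodule.subset_span ⟨a + b, rfl⟩
      · simp
      · intro y z _ _ h1 h2; rw [mul_add]; exact add_mem h1 h2
      · intro c y _ h1; rw [mul_smul_comm]; exact Submodule.smul_mem _ _ h1
    · intro y _; simp
    · intro y z _ _ h1 h2 w hw; rw [add_mul]; exact add_mem (h1 w hw) (h2 w hw)
    · intro c y _ h1 w hw; rw [smul_mul_assoc]; exact Submodule.smul_mem _ _ (h1 w hw)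
  have hχ_star : ∀ m : ℤ, star (χ m) = χ (-m) := by
    intro m; ext σ
    show star ((σ : ℂ) ^ m) = (σ : ℂ) ^ (-m)
    rw [show (star ((σ:ℂ)^m)) = (starRingEnd ℂ) ((σ:ℂ)^m) from rfl]
    rw [map_zpow₀, conj_sphere σ.2, inv_zpow, ← zpow_neg]
  have hLstar : ∀ x ∈ L, star x ∈ L := by
    intro x hx
    refine Submodule.span_induction ?_ ?_ ?_ ?_ hx
    · rintro x ⟨a, rfl⟩; rw [hχ_star]; exact Submodule.subset_span ⟨-a, rfl⟩
    · simp
    · intro y z _ _ h1 h2; rw [star_add]; exact add_mem h1 h2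
    · intro c y _ h1; rw [star_smul]; exact Submodule.smul_mem _ _ h1
  have hq_mem : q ∈ L := by
    refine StarAlgebra.adjoin_induction ?_ ?_ ?_ ?_ ?_ hqA
    · rintro x (rfl : x = ι)
      have : ι = χ 1 := by ext σ; simp [hι, hχ]
      rw [this]; exact Submodule.subset_span ⟨1, rfl⟩
    · intro r
      have h1 : (algebraMap ℂ C(X, ℂ)) r = r • χ 0 := by
        ext σ; simp [hχ, Algebra.algebraMap_eq_smul_one]
      rw [h1]; exact Submodule.smul_mem _ _ (Submodule.subset_span ⟨0, rfl⟩)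
    · intro x y _ _ hx hy; exact add_mem hx hy
    · intro x y _ _ hx hy; exact hLmul x hx y hy
    · intro x _ hx; exact hLstar x hx
  obtain ⟨c, hc⟩ := Finsupp.mem_span_range_iff_exists_finsupp.mp hq_mem
  -- define the entire correction pieces
  set Pplus : ℂ → ℂ := fun z => ∑ m ∈ c.support, if 0 < m then c m * z ^ m.toNat else 0
    with hPplus
  set Pneg : ℂ → ℂ := fun z =>
    ∑ m ∈ c.support, if m < 0 then (starRingEnd ℂ) (c m) * z ^ (-m).toNat else 0 with hPneg
  set c0 : ℂ := c 0 with hc0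
  have hPplus_diff : Differentiable ℂ Pplus := by
    apply Differentiable.fun_sum
    intro m _
    by_cases h : 0 < m <;> simp [h] <;> fun_prop
  have hPneg_diff : Differentiable ℂ Pneg := by
    apply Differentiable.fun_sum
    intro m _
    by_cases h : m < 0 <;> simp [h] <;> fun_prop
  refine ⟨fun z => Complex.exp (Pneg z - Pplus z - c0), ?_, fun z => Complex.exp_ne_zero _, ?_⟩
  · exact Complex.differentiable_exp.comp ((hPneg_diff.sub hPplus_diff).sub_const c0)
  intro σ hσ
  -- the key boundary identity:  q σ = c0 + Pplus σ + conj (Pneg σ)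
  have hσne := sphere_ne_zero hσ
  have hkey : q ⟨σ, hσ⟩ = c0 + Pplus σ + (starRingEnd ℂ) (Pneg σ) := by
    have happ : q ⟨σ, hσ⟩ = ∑ m ∈ c.support, c m * σ ^ m := by
      rw [← hc]
      rw [Finsupp.sum]
      rw [ContinuousMap.coe_sum]
      simp only [Finset.sum_apply]
      apply Finset.sum_congr rfl
      intro m _
      simp [hχ, smul_eq_mul]
    rw [happ]
    have hsplit : ∀ m ∈ c.support, c m * σ ^ m =
        (if 0 < m then c m * σ ^ m.toNat else 0) + (if m = 0 then c m else 0) +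
        (if m < 0 then c m * ((starRingEnd ℂ) σ) ^ (-m).toNat else 0) := by
      intro m _
      rcases lt_trichotomy m 0 with h | h | h
      · have h1 : ¬ 0 < m := by omega
        have h2 : m ≠ 0 := by omega
        simp only [h, h1, h2, if_true, if_false, if_neg h2]
        rw [conj_sphere hσ, zero_add, zero_add]
        rw [show ((σ:ℂ)⁻¹) ^ ((-m).toNat) = ((σ:ℂ)⁻¹) ^ (((-m).toNat : ℤ)) from
          (zpow_natCast _ _).symm]
        rw [inv_zpow, ← zpow_neg]
        have hmm : -((-m).toNat : ℤ) = m := by omega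
        rw [hmm]
      · subst h; simp
      · have h1 : ¬ m < 0 := by omega
        have h2 : m ≠ 0 := by omega
        simp only [h, h1, h2, if_true, if_false, if_neg h2]
        rw [add_zero, add_zero]
        rw [show σ ^ (m.toNat) = σ ^ ((m.toNat : ℤ)) from (zpow_natCast _ _).symm]
        have hmm : ((m.toNat : ℤ)) = m := by omega
        rw [hmm]
    rw [Finset.sum_congr rfl hsplit]
    rw [Finset.sum_add_distrib, Finset.sum_add_distrib]
    have hm0 : (∑ m ∈ c.support, if m = 0 then c m else 0) = c0 := by
      rw [Finset.sum_ite_eq' c.support 0 (fun m => c m)]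
      by_cases h : (0:ℤ) ∈ c.support
      · simp [h, hc0]
      · rw [if_neg h]
        rw [hc0, Finsupp.notMem_support_iff.mp h]
    have hmneg : (∑ m ∈ c.support, if m < 0 then c m * ((starRingEnd ℂ) σ) ^ (-m).toNat else 0)
        = (starRingEnd ℂ) (Pneg σ) := by
      rw [hPneg, map_sum]
      apply Finset.sum_congr rfl
      intro m _
      by_cases h : m < 0
      · simp only [h, if_true, map_mul, map_pow, RingHomCompTriple.comp_apply,
          Complex.conj_conj, RingHom.id_apply]
      · simp [h]
    rw [hm0, hmneg, hPplus]
    ring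
  -- approximation bound
  have hεbound : ‖u σ - q ⟨σ, hσ⟩‖ ≤ η := by
    have := ContinuousMap.dist_apply_le_dist (f := ub) (g := q) (⟨σ, hσ⟩ : X)
    have h2 : dist (ub ⟨σ, hσ⟩) (q ⟨σ, hσ⟩) ≤ dist ub q := this
    rw [Complex.dist_eq] at h2
    calc ‖u σ - q ⟨σ, hσ⟩‖ ≤ dist ub q := h2
    _ ≤ η := le_of_lt hq_dist
  -- final computation
  set ε : ℂ := u σ - q ⟨σ, hσ⟩ with hε
  have hexp : Complex.exp (Pneg σ - Pplus σ - c0) * Complex.exp (u σ)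
      = Complex.exp (Pneg σ + (starRingEnd ℂ) (Pneg σ) + ε) := by
    rw [← Complex.exp_add]
    congr 1
    rw [hε, hkey]; ring
  set x : ℝ := (Pneg σ).re * 2 + ε.re with hx
  set y : ℝ := ε.im with hy
  have hz : Pneg σ + (starRingEnd ℂ) (Pneg σ) + ε = (x : ℂ) + y * I := by
    apply Complex.ext <;> simp [hx, hy, Complex.add_re, Complex.add_im] <;> ring
  refine ⟨Real.exp x, y, Real.exp_pos x, ?_, ?_⟩
  · calc |y| = |ε.im| := rfl
    _ ≤ ‖ε‖ := Complex.abs_im_le_norm ε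
    _ ≤ η := hεbound
  · rw [hexp, hz, Complex.exp_add, Complex.ofReal_exp]


/-- The core a-priori estimate for the index-zero Riemann–Hilbert problem. -/
lemma core {u g E : ℂ → ℂ} {r : ℂ → ℝ}
    (hEc : Continuous E) (hEnz : ∀ z, E z ≠ 0)
    (hEprop : ∀ σ ∈ sphere (0:ℂ) 1, ∃ p θ : ℝ, 0 < p ∧ |θ| ≤ π/8 ∧
        E σ * Complex.exp (u σ) = (p:ℂ) * Complex.exp (θ * I))
    (hEd : DifferentiableOn ℂ E (ball 0 1))
    (hgc : ContinuousOn g (closedBall 0 1)) (hgd : DifferentiableOn ℂ g (ball 0 1))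
    (hbv : ∀ σ ∈ sphere (0:ℂ) 1, g σ = (r σ : ℂ) * I * Complex.exp (u σ)) :
    ((E 0 * g 0)^2).re ≤ 0 ∧ (g 0 = 0 → ∀ σ ∈ sphere (0:ℂ) 1, g σ = 0) := by
  set c : ℝ := Real.cos (π/4) with hcdef
  have hcpos : 0 < c := by
    rw [hcdef]; apply Real.cos_pos_of_mem_Ioo
    constructor <;> [skip; skip] <;> nlinarith [Real.pi_pos]
  set H : ℂ → ℂ := fun z => E z * g z with hH
  have hHc : ContinuousOn H (closedBall 0 1) := (hEc.continuousOn).mul hgc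
  have hHd : DifferentiableOn ℂ H (ball 0 1) := hEd.mul hgd
  -- pointwise boundary estimate
  have hpt : ∀ σ ∈ sphere (0:ℂ) 1, ((H σ)^2).re ≤ -c * ‖H σ‖^2 := by
    intro σ hσ
    obtain ⟨p, θ, hp, hθ, hpe⟩ := hEprop σ hσ
    have hHσ : H σ = ((r σ * p : ℝ) : ℂ) * (I * Complex.exp (θ * I)) := by
      rw [hH]
      show E σ * g σ = _
      rw [hbv σ hσ]
      push_cast
      calc E σ * ((r σ : ℂ) * I * Complex.exp (u σ))
          = (r σ : ℂ) * I * (E σ * Complex.exp (u σ)) := by ring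
        _ = (r σ : ℂ) * I * ((p:ℂ) * Complex.exp (θ * I)) := by rw [hpe]
        _ = (r σ : ℂ) * (p:ℂ) * (I * Complex.exp (θ * I)) := by ring
    have hsq : (H σ)^2 = -(((r σ * p : ℝ))^2 : ℂ) * Complex.exp ((2*θ : ℝ) * I) := by
      rw [hHσ]
      have : (I * Complex.exp ((θ:ℝ) * I))^2 = - Complex.exp (((2*θ : ℝ)) * I) := by
        rw [mul_pow, I_sq, ← Complex.exp_nat_mul]
        push_cast
        ring_nf
      rw [mul_pow, this]
      push_cast
      ring
    have hre : ((H σ)^2).re = -( (r σ * p)^2 * Real.cos (2*θ)) := by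
      rw [hsq]
      have h1 : (Complex.exp (((2*θ:ℝ)) * I)).re = Real.cos (2*θ) :=
        Complex.exp_ofReal_mul_I_re (2*θ)
      have : (-(((r σ * p : ℝ))^2 : ℂ)) = ((-(r σ * p)^2 : ℝ) : ℂ) := by push_cast; ring
      rw [this, Complex.re_ofReal_mul, h1]
      ring
    have habs : ‖H σ‖^2 = (r σ * p)^2 := by
      rw [hHσ, norm_mul, norm_mul, Complex.norm_real, Complex.norm_I, Complex.norm_exp]
      simp [sq_abs, mul_pow]
    rw [hre, habs]
    have hcos : c ≤ Real.cos (2*θ) := by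
      rw [hcdef, ← Real.cos_abs (2*θ)]
      apply Real.cos_le_cos_of_nonneg_of_le_pi (abs_nonneg _)
      · nlinarith [Real.pi_pos]
      · rw [abs_mul]
        rw [show |(2:ℝ)| = 2 by norm_num]
        nlinarith
    nlinarith [sq_nonneg (r σ * p)]
  -- mean value applied to H²
  have hH2c : ContinuousOn (fun z => (H z)^2) (closedBall (0:ℂ) 1) := hHc.pow 2
  have hH2d : DifferentiableOn ℂ (fun z => (H z)^2) (ball (0:ℂ) 1) := hHd.pow 2
  have hmv := meanvalue hH2c hH2d
  have hmap : ∀ θ : ℝ, circleMap 0 1 θ ∈ sphere (0:ℂ) 1 :=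
    fun θ => circleMap_mem_sphere 0 zero_le_one θ
  have hcont : Continuous (fun θ : ℝ => H (circleMap 0 1 θ)) :=
    hHc.comp_continuous (continuous_circleMap 0 1)
      (fun θ => sphere_subset_closedBall (hmap θ))
  have hic : Continuous (fun θ : ℝ => (H (circleMap 0 1 θ))^2) := hcont.pow 2
  have hre_int : (∫ θ in (0:ℝ)..(2*π), ((H (circleMap 0 1 θ))^2).re)
      = 2*π*((H 0)^2).re := by
    have hcomm := ContinuousLinearMap.intervalIntegral_comp_comm Complex.reCLM
      (hic.intervalIntegrable (μ := MeasureTheory.volume) 0 (2*π))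
    have h2 : (∫ θ in (0:ℝ)..(2*π), ((H (circleMap 0 1 θ))^2).re)
        = ((∫ θ in (0:ℝ)..(2*π), (H (circleMap 0 1 θ))^2)).re := hcomm
    rw [h2, hmv]
    rw [show (2*(π:ℂ)) = ((2*π : ℝ) : ℂ) by push_cast; ring]
    rw [Complex.re_ofReal_mul]
  have hmono : (∫ θ in (0:ℝ)..(2*π), ((H (circleMap 0 1 θ))^2).re)
      ≤ ∫ θ in (0:ℝ)..(2*π), -c * ‖H (circleMap 0 1 θ)‖^2 := by
    apply intervalIntegral.integral_mono_on (by positivity)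
      ((Complex.continuous_re.comp hic).intervalIntegrable _ _)
      ((continuous_const.mul ((continuous_norm.comp hcont).pow 2)).intervalIntegrable _ _)
    intro θ _
    exact hpt _ (hmap θ)
  have hWnn : ∀ θ:ℝ, 0 ≤ ‖H (circleMap 0 1 θ)‖^2 := fun θ => sq_nonneg _
  have hWint_nn : 0 ≤ ∫ θ in (0:ℝ)..(2*π), ‖H (circleMap 0 1 θ)‖^2 :=
    intervalIntegral.integral_nonneg (by positivity) (fun θ _ => hWnn θ)
  have hpull : (∫ θ in (0:ℝ)..(2*π), -c * ‖H (circleMap 0 1 θ)‖^2)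
      = -c * ∫ θ in (0:ℝ)..(2*π), ‖H (circleMap 0 1 θ)‖^2 :=
    intervalIntegral.integral_const_mul _ _
  have hmain : 2*π*((H 0)^2).re
      ≤ -c * ∫ θ in (0:ℝ)..(2*π), ‖H (circleMap 0 1 θ)‖^2 := by
    rw [← hre_int, ← hpull]; exact hmono
  have hπ : (0:ℝ) < 2*π := by positivity
  have hH0 : H 0 = E 0 * g 0 := rfl
  constructor
  · have h1 : 2*π*((H 0)^2).re ≤ 0 := le_trans hmain (by nlinarith)
    rw [← hH0]
    nlinarith
  · intro hg0
    have hH00 : H 0 = 0 := by rw [hH0, hg0, mul_zero]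
    have h1 : (0:ℝ) ≤ -c * ∫ θ in (0:ℝ)..(2*π), ‖H (circleMap 0 1 θ)‖^2 := by
      have := hmain
      rw [hH00] at this
      simpa using this
    have h2 : (∫ θ in (0:ℝ)..(2*π), ‖H (circleMap 0 1 θ)‖^2) = 0 := by
      nlinarith
    have hWc : Continuous (fun θ : ℝ => ‖H (circleMap 0 1 θ)‖^2) :=
      (continuous_norm.comp hcont).pow 2
    have hWper : Function.Periodic (fun θ : ℝ => ‖H (circleMap 0 1 θ)‖^2) (2*π) :=
      (periodic_circleMap 0 1).comp (fun z => ‖H z‖^2)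
    have hzero := zero_of_integral_zero hWc hWnn hWper h2
    intro σ hσ
    obtain ⟨θ, hθ⟩ := exists_theta hσ
    have hab : ‖H σ‖^2 = 0 := by rw [← hθ]; exact hzero θ
    have hHσ0 : H σ = 0 := by
      have := pow_eq_zero_iff (n := 2) (by norm_num) |>.mp hab
      exact norm_eq_zero.mp this
    have : E σ * g σ = 0 := hHσ0
    rcases mul_eq_zero.mp this with h | h
    · exact absurd h (hEnz σ)
    · exact h


lemma eval_contOn {n : ℕ} {Ω : ℂ → Fin n → ℂ} {s : Set ℂ} (h : ContinuousOn Ω s) (j : Fin n) :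
    ContinuousOn (fun z => Ω z j) s := fun z hz =>
  ((continuous_apply j).continuousAt).comp_continuousWithinAt (h z hz)

lemma eval_diffOn {n : ℕ} {Ω : ℂ → Fin n → ℂ} {s : Set ℂ} (h : DifferentiableOn ℂ Ω s)
    (j : Fin n) : DifferentiableOn ℂ (fun z => Ω z j) s := fun z hz =>
  ((ContinuousLinearMap.proj (R := ℂ) (φ := fun _ : Fin n => ℂ) j).differentiable.differentiableAt).comp_differentiableWithinAt
    z (h z hz)


end Stmt16Aux

open Set
open scoped Real

/-- for a real hypersurface `M = {ρ = 0} ⊂ ℂⁿ` and an analytic disc `φ`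
attached to `M` with `ρ_{z₁}∘φ ≠ 0` on the unit circle, if `s` is the winding number of
`σ ↦ ρ_{z₁}[φ(σ)]`, then the defect of `φ` satisfies `d(φ) ≤ max(0, 2s+1)`. -/
theorem stmt_16 (n : ℕ) (hn : 0 < n)
    (ε δ : ℝ≥0) (hδ0 : 0 < δ) (hδε : δ < ε) (hε1 : (ε : ℝ) < 1)
    (ρ : (Fin n → ℂ) → ℝ)
    (hρ2 : ContDiff ℝ 2 ρ)
    (hρH : ∀ K : Set (Fin n → ℂ), IsCompact K →
      ∃ C, HolderOnWith C ε (fderiv ℝ (fderiv ℝ ρ)) K)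
    (φ : ℂ → Fin n → ℂ)
    (hφc : ContinuousOn φ (closedBall 0 1))
    (hφh : DifferentiableOn ℂ φ (ball 0 1))
    (hφ1 : C1HolderDisc δ φ)
    (hbd : ∀ σ ∈ sphere (0:ℂ) 1, ρ (φ σ) = 0)
    (hnz : ∀ σ ∈ sphere (0:ℂ) 1, wirt ρ (φ σ) ⟨0, hn⟩ ≠ 0)
    (s : ℤ)
    (hwind : ∃ u : ℂ → ℂ, ContinuousOn u (sphere (0:ℂ) 1) ∧
      ∀ σ ∈ sphere (0:ℂ) 1, wirt ρ (φ σ) ⟨0, hn⟩ = σ ^ s * Complex.exp (u σ)) :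
    ∃ V : Submodule ℝ (↥(sphere (0:ℂ) 1) → Fin n → ℂ),
      (V : Set (↥(sphere (0:ℂ) 1) → Fin n → ℂ)) =
        (fun ω : ℂ → Fin n → ℂ => fun σ : ↥(sphere (0:ℂ) 1) => ω (σ : ℂ)) ''
          {ω : ℂ → Fin n → ℂ |
            (∃ r : ℂ → ℝ, C1HolderCircle δ r ∧
              ∀ σ ∈ sphere (0:ℂ) 1, ∀ j,
                ω σ j = (r σ : ℂ) * Complex.I * wirt ρ (φ σ) j) ∧
            ∃ Ω : ℂ → Fin n → ℂ, ContinuousOn Ω (closedBall 0 1) ∧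
              DifferentiableOn ℂ Ω (ball 0 1) ∧
              ∀ σ ∈ sphere (0:ℂ) 1, Ω σ = ω σ} ∧
      FiniteDimensional ℝ V ∧
      (Module.finrank ℝ V : ℤ) ≤ max 0 (2 * s + 1) := by
  classical
  obtain ⟨u, hu, hwu⟩ := hwind
  obtain ⟨E, hEdiff, hEnz, hEprop⟩ := Stmt16Aux.exists_E hu (by positivity : (0:ℝ) < π/8)
  set e1 : Fin n := ⟨0, hn⟩ with he1
  set Sset : Set (↥(sphere (0:ℂ) 1) → Fin n → ℂ) :=
    (fun ω : ℂ → Fin n → ℂ => fun σ : ↥(sphere (0:ℂ) 1) => ω (σ : ℂ)) ''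
      {ω : ℂ → Fin n → ℂ |
        (∃ r : ℂ → ℝ, C1HolderCircle δ r ∧
          ∀ σ ∈ sphere (0:ℂ) 1, ∀ j,
            ω σ j = (r σ : ℂ) * Complex.I * wirt ρ (φ σ) j) ∧
        ∃ Ω : ℂ → Fin n → ℂ, ContinuousOn Ω (closedBall 0 1) ∧
          DifferentiableOn ℂ Ω (ball 0 1) ∧
          ∀ σ ∈ sphere (0:ℂ) 1, Ω σ = ω σ} with hSset
  -- zero belongs to the set
  have hzero : (0 : ↥(sphere (0:ℂ) 1) → Fin n → ℂ) ∈ Sset := by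
    refine ⟨0, ⟨⟨fun _ => 0, ⟨contDiff_const, 0, ?_⟩, ?_⟩, 0, continuousOn_const,
      (differentiable_const _).differentiableOn, fun σ _ => rfl⟩, rfl⟩
    · intro x y
      have : deriv (fun _ : ℝ => (0:ℝ)) = fun _ => 0 := deriv_const' 0
      rw [this]
      simp
    · intro σ _ j; simp
  -- closure under addition
  have hadd : ∀ a ∈ Sset, ∀ b ∈ Sset, a + b ∈ Sset := by
    rintro a ⟨ω₁, ⟨⟨r₁, hH₁, he₁⟩, Ω₁, hc₁, hd₁, hb₁⟩, rfl⟩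
      b ⟨ω₂, ⟨⟨r₂, hH₂, he₂⟩, Ω₂, hc₂, hd₂, hb₂⟩, rfl⟩
    refine ⟨fun z => ω₁ z + ω₂ z, ⟨⟨fun z => r₁ z + r₂ z, ⟨hH₁.1.add hH₂.1, ?_⟩, ?_⟩,
      fun z => Ω₁ z + Ω₂ z, hc₁.add hc₂, hd₁.add hd₂, ?_⟩, rfl⟩
    · obtain ⟨C₁, hC₁⟩ := hH₁.2
      obtain ⟨C₂, hC₂⟩ := hH₂.2
      refine ⟨C₁ + C₂, ?_⟩
      have hder : deriv (fun θ : ℝ => r₁ (Complex.exp (θ * Complex.I))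
            + r₂ (Complex.exp (θ * Complex.I)))
          = (deriv (fun θ : ℝ => r₁ (Complex.exp (θ * Complex.I)))
            + deriv (fun θ : ℝ => r₂ (Complex.exp (θ * Complex.I)))) := by
        funext θ
        exact deriv_add ((hH₁.1.differentiable one_ne_zero).differentiableAt)
          ((hH₂.1.differentiable one_ne_zero).differentiableAt)
      rw [hder]
      exact hC₁.add hC₂
    · intro σ hσ j
      have := he₁ σ hσ j
      have := he₂ σ hσ j
      show ω₁ σ j + ω₂ σ j = _
      rw [he₁ σ hσ j, he₂ σ hσ j]
      push_cast
      ring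
    · intro σ hσ
      show Ω₁ σ + Ω₂ σ = ω₁ σ + ω₂ σ
      rw [hb₁ σ hσ, hb₂ σ hσ]
  -- closure under real scalars
  have hsmul : ∀ (c : ℝ), ∀ a ∈ Sset, c • a ∈ Sset := by
    rintro c a ⟨ω, ⟨⟨r, hH, heq⟩, Ω, hc₀, hd₀, hb₀⟩, rfl⟩
    refine ⟨fun z => c • ω z, ⟨⟨fun z => c * r z, ⟨contDiff_const.mul hH.1, ?_⟩, ?_⟩,
      fun z => c • Ω z, hc₀.const_smul c, hd₀.const_smul c, ?_⟩, rfl⟩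
    · obtain ⟨C, hC⟩ := hH.2
      refine ⟨C * ‖c‖₊, ?_⟩
      have hder : deriv (fun θ : ℝ => c * r (Complex.exp (θ * Complex.I)))
          = (c • deriv (fun θ : ℝ => r (Complex.exp (θ * Complex.I)))) := by
        funext θ
        exact deriv_const_mul c ((hH.1.differentiable one_ne_zero).differentiableAt)
      rw [hder]
      exact hC.smul c
    · intro σ hσ j
      show c • ω σ j = _
      rw [heq σ hσ j, Complex.real_smul]
      push_cast
      ring
    · intro σ hσ
      show c • Ω σ = c • ω σ
      rw [hb₀ σ hσ]
  -- boundary value function and the Taylor-coefficient functionals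
  set bdry : (↥(sphere (0:ℂ) 1) → Fin n → ℂ) → ℂ → ℂ :=
    fun f z => if hz : z ∈ sphere (0:ℂ) 1 then f ⟨z, hz⟩ e1 else 0 with hbdry
  set cI : ℕ → (↥(sphere (0:ℂ) 1) → Fin n → ℂ) → ℂ :=
    fun j f => (2*π*I : ℂ)⁻¹ * ∮ z in C(0, 1), (z^(j+1))⁻¹ • bdry f z with hcI
  -- unpacking membership
  have hunpack : ∀ f ∈ Sset, ∃ (r : ℂ → ℝ) (g : ℂ → ℂ),
      ContinuousOn g (closedBall 0 1) ∧ DifferentiableOn ℂ g (ball 0 1) ∧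
      (∀ σ ∈ sphere (0:ℂ) 1, bdry f σ = g σ) ∧
      (∀ σ ∈ sphere (0:ℂ) 1, g σ = (r σ : ℂ) * I * (σ ^ s * Complex.exp (u σ))) ∧
      (∀ (σ : ℂ) (hσ : σ ∈ sphere (0:ℂ) 1) (j : Fin n),
        f ⟨σ, hσ⟩ j = (r σ : ℂ) * I * wirt ρ (φ σ) j) := by
    rintro f ⟨ω, ⟨⟨r, hrH, hωr⟩, Ω, hΩc, hΩd, hΩω⟩, rfl⟩
    refine ⟨r, fun z => Ω z e1, Stmt16Aux.eval_contOn hΩc e1, Stmt16Aux.eval_diffOn hΩd e1,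
      ?_, ?_, ?_⟩
    · intro σ hσ
      simp only [hbdry, dif_pos hσ]
      exact (congrFun (hΩω σ hσ) e1).symm
    · intro σ hσ
      show Ω σ e1 = _
      rw [hΩω σ hσ, hωr σ hσ e1, ← hwu σ hσ]
    · intro σ hσ j
      exact hωr σ hσ j
  -- circle integrability
  have hint : ∀ f ∈ Sset, ∀ j : ℕ,
      CircleIntegrable (fun z => (z^(j+1))⁻¹ • bdry f z) 0 1 := by
    intro f hf j
    obtain ⟨r, g, hgc, hgd, hbg, _, _⟩ := hunpack f hf
    have hcont : Continuous fun θ : ℝ =>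
        ((circleMap 0 1 θ)^(j+1))⁻¹ * g (circleMap 0 1 θ) := by
      apply Continuous.mul
      · apply Continuous.inv₀ ((continuous_circleMap 0 1).pow (j+1))
        intro θ; exact pow_ne_zero _ (circleMap_ne_center one_ne_zero)
      · exact hgc.comp_continuous (continuous_circleMap 0 1)
          (fun θ => sphere_subset_closedBall (circleMap_mem_sphere 0 zero_le_one θ))
    show IntervalIntegrable _ MeasureTheory.volume 0 (2*π)
    have heqf : (fun θ : ℝ => ((circleMap 0 1 θ)^(j+1))⁻¹ • bdry f (circleMap 0 1 θ))
        = fun θ : ℝ => ((circleMap 0 1 θ)^(j+1))⁻¹ * g (circleMap 0 1 θ) := by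
      funext θ
      rw [hbg _ (circleMap_mem_sphere 0 zero_le_one θ), smul_eq_mul]
    show IntervalIntegrable (fun θ : ℝ =>
      ((circleMap 0 1 θ)^(j+1))⁻¹ • bdry f (circleMap 0 1 θ)) MeasureTheory.volume 0 (2*π)
    rw [heqf]
    exact hcont.intervalIntegrable 0 (2*π)
  -- additivity and homogeneity of the coefficients
  have hcI_add : ∀ (j : ℕ), ∀ a ∈ Sset, ∀ b ∈ Sset, cI j (a + b) = cI j a + cI j b := by
    intro j a ha b hb
    rw [hcI]
    show (2*π*I : ℂ)⁻¹ * (∮ z in C(0, 1), (z^(j+1))⁻¹ • bdry (a+b) z) = _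
    have heqf : (fun z => (z^(j+1))⁻¹ • bdry (a+b) z)
        = fun z => ((z^(j+1))⁻¹ • bdry a z) + ((z^(j+1))⁻¹ • bdry b z) := by
      funext z
      have hsplit : bdry (a + b) z = bdry a z + bdry b z := by
        simp only [hbdry]
        by_cases hz : z ∈ sphere (0:ℂ) 1
        · simp only [dif_pos hz]; rfl
        · simp only [dif_neg hz]; simp
      rw [hsplit, smul_add]
    rw [heqf, Stmt16Aux.circleIntegral_add (hint a ha j) (hint b hb j)]
    ring
  have hcI_smul : ∀ (j : ℕ) (c : ℝ), ∀ a ∈ Sset, cI j (c • a) = c • cI j a := by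
    intro j c a ha
    rw [hcI]
    show (2*π*I : ℂ)⁻¹ * (∮ z in C(0, 1), (z^(j+1))⁻¹ • bdry (c • a) z) = _
    have heqf : (fun z => (z^(j+1))⁻¹ • bdry (c • a) z)
        = fun z => c • ((z^(j+1))⁻¹ • bdry a z) := by
      funext z
      have hsplit : bdry (c • a) z = c • bdry a z := by
        simp only [hbdry]
        by_cases hz : z ∈ sphere (0:ℂ) 1
        · simp only [dif_pos hz]; rfl
        · simp only [dif_neg hz]; simp
      rw [hsplit, smul_comm]
    rw [heqf, circleIntegral.integral_smul]
    show (2*π*I : ℂ)⁻¹ * c • (∮ z in C(0, 1), (z^(j+1))⁻¹ • bdry a z)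
        = c • ((2*π*I : ℂ)⁻¹ * ∮ z in C(0, 1), (z^(j+1))⁻¹ • bdry a z)
    rw [Complex.real_smul, Complex.real_smul]
    ring
  -- the key analytic machine
  have hmachine : ∀ (m : ℕ), (m : ℤ) = s → ∀ f ∈ Sset,
      (∀ j : ℕ, j < m → cI j f = 0) →
      ((E 0 * cI m f)^2).re ≤ 0 ∧ (cI m f = 0 → f = 0) := by
    intro m hms f hf hvan
    obtain ⟨r, g, hgc, hgd, hbg, hgu, hfw⟩ := hunpack f hf
    obtain ⟨h, hhc, hhd, hhb, hh0⟩ := Stmt16Aux.exists_iterate hgc hgd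
      (fun σ hσ => (hbg σ hσ).symm) m (fun j hj => hvan j hj)
    have hhbv : ∀ σ ∈ sphere (0:ℂ) 1, h σ = (r σ : ℂ) * I * Complex.exp (u σ) := by
      intro σ hσ
      have hne := Stmt16Aux.sphere_ne_zero hσ
      rw [hhb σ hσ, hgu σ hσ]
      have hzp : (σ : ℂ) ^ s = σ ^ m := by rw [← hms, zpow_natCast]
      rw [hzp]
      have hpne : (σ:ℂ)^m ≠ 0 := pow_ne_zero _ hne
      field_simp
    have hcore := Stmt16Aux.core hEdiff.continuous hEnz hEprop hEdiff.differentiableOn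
      hhc hhd hhbv
    have hh0' : h 0 = cI m f := by rw [hh0]
    constructor
    · rw [← hh0']; exact hcore.1
    · intro hcm
      have hz : ∀ σ ∈ sphere (0:ℂ) 1, h σ = 0 := hcore.2 (by rw [hh0', hcm])
      have hrz : ∀ σ ∈ sphere (0:ℂ) 1, (r σ : ℂ) = 0 := by
        intro σ hσ
        have h1 := hhbv σ hσ
        rw [hz σ hσ] at h1
        rcases mul_eq_zero.mp h1.symm with h3 | h3
        · rcases mul_eq_zero.mp h3 with h4 | h4
          · exact h4
          · exact absurd h4 I_ne_zero
        · exact absurd h3 (Complex.exp_ne_zero _)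
      funext σ j
      have hj := hfw σ.1 σ.2 j
      rw [show (⟨σ.1, σ.2⟩ : ↥(sphere (0:ℂ) 1)) = σ from rfl] at hj
      rw [hj, hrz σ.1 σ.2, zero_mul, zero_mul]
      simp
  rcases le_or_gt 0 s with hs | hs
  · -- the case s ≥ 0
    set m := s.toNat with hm
    have hms : (m : ℤ) = s := Int.toNat_of_nonneg hs
    set V : Submodule ℝ (↥(sphere (0:ℂ) 1) → Fin n → ℂ) :=
      { carrier := Sset
        add_mem' := fun {a b} ha hb => hadd a ha b hb
        zero_mem' := hzero
        smul_mem' := fun c {a} ha => hsmul c a ha } with hV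
    have hmemV : ∀ v : V, (v : ↥(sphere (0:ℂ) 1) → Fin n → ℂ) ∈ Sset := fun v => v.2
    set cLM : ℕ → (V →ₗ[ℝ] ℂ) := fun j =>
      { toFun := fun v => cI j v
        map_add' := fun v w => hcI_add j v (hmemV v) w (hmemV w)
        map_smul' := fun c v => hcI_smul j c v (hmemV v) } with hcLM
    set T : V →ₗ[ℝ] (Fin m → ℂ) := LinearMap.pi (fun j : Fin m => cLM j) with hT
    set Ψ : V →ₗ[ℝ] (Fin m → ℂ) × ℂ := T.prod (cLM m) with hΨ
    have hΨinj : Function.Injective Ψ := by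
      rw [← LinearMap.ker_eq_bot, LinearMap.ker_eq_bot']
      intro v hv
      have h1 : ∀ j : Fin m, cI j v = 0 := by
        intro j
        exact congrFun (congrArg Prod.fst hv) j
      have h2 : cI m v = 0 := congrArg Prod.snd hv
      have hvan : ∀ j : ℕ, j < m → cI j (v : _) = 0 := fun j hj => h1 ⟨j, hj⟩
      exact Subtype.ext ((hmachine m hms v (hmemV v) hvan).2 h2)
    haveI hfin : FiniteDimensional ℝ V := FiniteDimensional.of_injective Ψ hΨinj
    refine ⟨V, rfl, hfin, ?_⟩
    have hpidim : Module.finrank ℝ (Fin m → ℂ) = 2 * m := by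
      rw [Module.finrank_pi_fintype]
      simp [Complex.finrank_real_complex]
      ring
    have hrange : Module.finrank ℝ (LinearMap.range T) ≤ 2 * m := by
      have h1 := Submodule.finrank_le (LinearMap.range T)
      rwa [hpidim] at h1
    set K := LinearMap.ker T with hK
    set ψ : K →ₗ[ℝ] ℂ := (cLM m).comp K.subtype with hψ
    have hvanK : ∀ k : K, ∀ j : ℕ, j < m → cI j (((k : V)) : _) = 0 := by
      intro k j hj
      have h1 : T (k : V) = 0 := LinearMap.mem_ker.mp k.2
      exact congrFun h1 ⟨j, hj⟩
    have hψker : LinearMap.ker ψ = ⊥ := by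
      rw [LinearMap.ker_eq_bot']
      intro k hk
      have h2 : cI m (((k : V)) : _) = 0 := hk
      exact Subtype.ext (Subtype.ext ((hmachine m hms _ (hmemV (k : V)) (hvanK k)).2 h2))
    haveI hKfin : FiniteDimensional ℝ K := inferInstance
    have hKrank : Module.finrank ℝ K = Module.finrank ℝ (LinearMap.range ψ) :=
      by
        have hinj : Function.Injective ψ := by
          intro a b hab
          have hTa : T (a : V) = 0 := LinearMap.mem_ker.mp a.2
          have hTb : T (b : V) = 0 := LinearMap.mem_ker.mp b.2
          have hmem : (a : V) - (b : V) ∈ K := by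
            show T ((a : V) - (b : V)) = 0
            rw [map_sub, hTa, hTb, sub_self]
          have hz : ψ ⟨(a : V) - (b : V), hmem⟩ = 0 := by
            show cLM m ((a : V) - (b : V)) = 0
            rw [map_sub]; exact sub_eq_zero.mpr hab
          have h0 := LinearMap.ker_eq_bot'.mp hψker _ hz
          exact Subtype.ext (sub_eq_zero.mp (congrArg Subtype.val h0))
        exact (LinearMap.finrank_range_of_inj hinj).symm
    have hrpsi : Module.finrank ℝ (LinearMap.range ψ) ≤ 1 := by
      by_contra hlt
      push_neg at hlt
      have hle : Module.finrank ℝ (LinearMap.range ψ) ≤ Module.finrank ℝ ℂ :=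
        Submodule.finrank_le _
      rw [Complex.finrank_real_complex] at hle
      have heq : Module.finrank ℝ (LinearMap.range ψ) = Module.finrank ℝ ℂ := by
        rw [Complex.finrank_real_complex]; omega
      have htop := Submodule.eq_top_of_finrank_eq heq
      have hmemE : (E 0)⁻¹ ∈ LinearMap.range ψ := by rw [htop]; trivial
      obtain ⟨k, hk⟩ := hmemE
      have h1 := (hmachine m hms _ (hmemV (k : V)) (hvanK k)).1
      have h2 : cI m (((k : V)) : _) = (E 0)⁻¹ := hk
      rw [h2, mul_inv_cancel₀ (hEnz 0), one_pow, Complex.one_re] at h1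
      norm_num at h1
    have hrk := LinearMap.finrank_range_add_finrank_ker T
    rw [← hK] at hrk
    have htotal : Module.finrank ℝ V ≤ 2 * m + 1 := by omega
    have hnn : (0:ℤ) ≤ 2 * s + 1 := by omega
    rw [max_eq_right hnn]
    have hcast : (Module.finrank ℝ V : ℤ) ≤ 2 * m + 1 := by exact_mod_cast htotal
    omega
  · -- the case s < 0
    refine ⟨⊥, ?_, inferInstance, ?_⟩
    · rw [Submodule.bot_coe]
      apply Subset.antisymm
      · intro f hf
        rw [mem_singleton_iff] at hf
        rw [hf]
        exact hzero
      · intro f hf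
        rw [mem_singleton_iff]
        obtain ⟨r, g, hgc, hgd, hbg, hgu, hfw⟩ := hunpack f hf
        set mg := (-s).toNat with hmg
        have hmgs : (mg : ℤ) = -s := Int.toNat_of_nonneg (by omega)
        set G : ℂ → ℂ := fun z => z^mg * g z with hG
        have hGc : ContinuousOn G (closedBall 0 1) := (continuous_pow mg).continuousOn.mul hgc
        have hGd : DifferentiableOn ℂ G (ball 0 1) :=
          (differentiable_pow mg).differentiableOn.mul hgd
        have hGb : ∀ σ ∈ sphere (0:ℂ) 1, G σ = (r σ : ℂ) * I * Complex.exp (u σ) := by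
          intro σ hσ
          have hne := Stmt16Aux.sphere_ne_zero hσ
          show σ^mg * g σ = _
          rw [hgu σ hσ]
          have hone : (σ:ℂ)^mg * σ^s = 1 := by
            rw [← zpow_natCast σ mg, ← zpow_add₀ hne]
            rw [show ((mg:ℤ) + s) = 0 by omega, zpow_zero]
          calc σ^mg * ((r σ:ℂ) * I * (σ^s * Complex.exp (u σ)))
              = ((r σ:ℂ) * I * Complex.exp (u σ)) * ((σ:ℂ)^mg * σ^s) := by ring
            _ = _ := by rw [hone, mul_one]
        have hG0 : G 0 = 0 := by
          show (0:ℂ)^mg * g 0 = 0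
          rw [zero_pow (by omega : mg ≠ 0), zero_mul]
        have hcore := Stmt16Aux.core hEdiff.continuous hEnz hEprop hEdiff.differentiableOn
          hGc hGd hGb
        have hz := hcore.2 hG0
        have hrz : ∀ σ ∈ sphere (0:ℂ) 1, (r σ : ℂ) = 0 := by
          intro σ hσ
          have h1 := hGb σ hσ
          rw [hz σ hσ] at h1
          rcases mul_eq_zero.mp h1.symm with h3 | h3
          · rcases mul_eq_zero.mp h3 with h4 | h4
            · exact h4
            · exact absurd h4 I_ne_zero
          · exact absurd h3 (Complex.exp_ne_zero _)
        funext σ j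
        have hj := hfw σ.1 σ.2 j
        rw [show (⟨σ.1, σ.2⟩ : ↥(sphere (0:ℂ) 1)) = σ from rfl] at hj
        rw [hj, hrz σ.1 σ.2, zero_mul, zero_mul]
        simp
    · rw [finrank_bot]
      simp only [Nat.cast_zero]
      exact le_max_left 0 _
end

section
/- Let G : Γ → GL(m,ℝ) and G₀ : Γ → GL(m,ℝ) be the unique C^{1,δ} solutions of G = 1 − T₁[G·H] and G₀ = 1 − T₀[G₀·H] respectively, where H = h_y∘φ is a real m×m matrix function on Γ with ‖H‖ small (so that the fixed-point equations are solvable), T₁ is the Hilbert transform normalized at 1, and T₀ the Hilbert transform normalized by zero mean. Then there exists a constant matrix C ∈ GL(m,ℝ) such that G₀ = C·G; moreover G₀(1 + iH) extends holomorphically to D and T₀G₀ = G₀H − (1/2π)∫₀^{2π} G₀(σ)H(σ) dθ. -/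
open Complex Metric intervalIntegral
open scoped NNReal Real

section Aux

variable {m : ℕ} {s : Set ℂ}

/-- A holomorphic function on the unit disc, continuous up to the boundary, whose boundary
values are real, is constant. -/
lemma constOfRealBoundary {F : ℂ → ℂ} (hc : ContinuousOn F (closedBall 0 1))
    (hd : DifferentiableOn ℂ F (ball 0 1))
    (him : ∀ σ ∈ sphere (0:ℂ) 1, (F σ).im = 0) :
    ∀ z ∈ closedBall (0:ℂ) 1, F z = F 1 := by
  have hcl : closure (ball (0:ℂ) 1) = closedBall 0 1 := closure_ball 0 one_ne_zero
  have hfr : frontier (ball (0:ℂ) 1) = sphere 0 1 := frontier_ball 0 one_ne_zero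
  have key : ∀ s : ℂ, s.re = 0 → ∀ z ∈ closedBall (0:ℂ) 1,
      ‖Complex.exp (s * F z)‖ ≤ 1 := by
    intro s hs z hz
    have hdc' : DiffContOnCl ℂ (fun z => Complex.exp (s * F z)) (ball 0 1) :=
      ⟨(hd.const_mul _).cexp, ((hcl ▸ hc).const_smul s |>.cexp)⟩
    refine norm_le_of_forall_mem_frontier_norm_le isBounded_ball hdc' ?_ (hcl ▸ hz)
    intro w hw
    rw [hfr] at hw
    rw [Complex.norm_exp, Complex.mul_re, hs, him w hw]
    simp
  have him' : ∀ z ∈ closedBall (0:ℂ) 1, (F z).im = 0 := by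
    intro z hz
    have h1 := key I (by simp) z hz
    have h2 := key (-I) (by simp) z hz
    rw [Complex.norm_exp] at h1 h2
    have e1 : (I * F z).re = -(F z).im := by simp [Complex.mul_re]
    have e2 : (-I * F z).re = (F z).im := by simp [Complex.mul_re]
    rw [e1] at h1; rw [e2] at h2
    have := Real.exp_le_one_iff.mp h1
    have := Real.exp_le_one_iff.mp h2
    linarith
  set g : ℂ → ℂ := fun z => Complex.exp (I * F z) with hg
  have hgnorm : ∀ z ∈ closedBall (0:ℂ) 1, ‖g z‖ = 1 := by
    intro z hz
    rw [hg, Complex.norm_exp]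
    have : (I * F z).re = -(F z).im := by simp [Complex.mul_re]
    rw [this, him' z hz, neg_zero, Real.exp_zero]
  have hderiv : ∀ z ∈ ball (0:ℂ) 1, deriv F z = 0 := by
    intro z hz
    have hF : HasDerivAt F (deriv F z) z :=
      (hd.differentiableAt (isOpen_ball.mem_nhds hz)).hasDerivAt
    have hgd : HasDerivAt g (Complex.exp (I * F z) * (I * deriv F z)) z :=
      (hF.const_mul I).cexp
    have hmax : IsMaxOn (norm ∘ g) (ball (0:ℂ) 1) 0 := by
      intro x hx
      simp only [Function.comp_apply, Set.mem_setOf_eq]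
      rw [hgnorm x (ball_subset_closedBall hx), hgnorm 0 (by simp)]
    have hgc : Set.EqOn g (Function.const ℂ (g 0)) (ball (0:ℂ) 1) :=
      Complex.eqOn_of_isPreconnected_of_isMaxOn_norm (convex_ball 0 1).isPreconnected
        isOpen_ball ((hd.const_mul _).cexp) (by simp) hmax
    have hgd0 : HasDerivAt g 0 z := by
      refine (hasDerivAt_const z (g 0)).congr_of_eventuallyEq ?_
      filter_upwards [isOpen_ball.mem_nhds hz] with w hw
      exact hgc hw
    have h0 : Complex.exp (I * F z) * (I * deriv F z) = 0 := hgd.unique hgd0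
    rcases mul_eq_zero.mp h0 with h | h
    · exact absurd h (Complex.exp_ne_zero _)
    · rcases mul_eq_zero.mp h with h | h
      · exact absurd h I_ne_zero
      · exact h
  have hconst : ∀ z ∈ ball (0:ℂ) 1, F z = F 0 := by
    intro z hz
    refine Convex.is_const_of_fderivWithin_eq_zero (convex_ball (0:ℂ) 1) hd ?_ hz (by simp)
    intro x hx
    rw [fderivWithin_of_isOpen isOpen_ball hx]
    have hF : HasDerivAt F (deriv F x) x :=
      (hd.differentiableAt (isOpen_ball.mem_nhds hx)).hasDerivAt
    rw [hderiv x hx] at hF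
    rw [hF.hasFDerivAt.fderiv]
    ext
    simp
  have hclosed : ∀ z ∈ closedBall (0:ℂ) 1, F z = F 0 := by
    have : Set.EqOn F (fun _ => F 0) (closedBall (0:ℂ) 1) := by
      refine Set.EqOn.of_subset_closure (fun z hz => hconst z hz) hc continuousOn_const
        ball_subset_closedBall ?_
      rw [hcl]
    exact fun z hz => this hz
  intro z hz
  rw [hclosed z hz, hclosed 1 (by simp)]

lemma entryDiffOn {A : ℂ → Fin m → Fin m → ℂ} (h : DifferentiableOn ℂ A s) (i j : Fin m) :
    DifferentiableOn ℂ (fun z => A z i j) s :=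
  (differentiableOn_pi.mp ((differentiableOn_pi.mp h) i)) j

lemma entryContOn {A : ℂ → Fin m → Fin m → ℂ} (h : ContinuousOn A s) (i j : Fin m) :
    ContinuousOn (fun z => A z i j) s :=
  ((continuous_apply j).comp_continuousOn (((continuous_apply i).comp_continuousOn h)))

lemma diffOn_det {A : ℂ → Fin m → Fin m → ℂ} (h : DifferentiableOn ℂ A s) :
    DifferentiableOn ℂ (fun z => (Matrix.of (A z)).det) s := by
  simp only [Matrix.det_apply', Matrix.of_apply]
  apply DifferentiableOn.fun_sum
  intro σ _
  apply DifferentiableOn.const_mul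
  exact DifferentiableOn.fun_finset_prod (u := Finset.univ)
    (f := fun i z => A z (σ i) i) fun i _ => entryDiffOn h (σ i) i

lemma diffOn_adjugate {A : ℂ → Fin m → Fin m → ℂ} (h : DifferentiableOn ℂ A s) (l j : Fin m) :
    DifferentiableOn ℂ (fun z => (Matrix.of (A z)).adjugate l j) s := by
  simp only [Matrix.adjugate_apply, Matrix.det_apply']
  apply DifferentiableOn.fun_sum
  intro σ _
  apply DifferentiableOn.const_mul
  refine DifferentiableOn.fun_finset_prod (u := Finset.univ)
    (f := fun i z => ((Matrix.of (A z)).updateRow j (Pi.single l 1)) (σ i) i) fun i _ => ?_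
  by_cases hij : σ i = j
  · simp only [Matrix.updateRow_apply, hij, if_pos rfl]
    exact differentiableOn_const _
  · simp only [Matrix.updateRow_apply, if_neg hij, Matrix.of_apply]
    exact entryDiffOn h (σ i) i

lemma contOn_matrix {A : ℂ → Fin m → Fin m → ℂ} (h : ContinuousOn A s) :
    ContinuousOn (fun z => Matrix.of (A z)) s :=
  continuousOn_pi.mpr fun i => continuousOn_pi.mpr fun j => entryContOn h i j

lemma contOn_det {A : ℂ → Fin m → Fin m → ℂ} (h : ContinuousOn A s) :
    ContinuousOn (fun z => (Matrix.of (A z)).det) s :=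
  (Continuous.matrix_det continuous_id).comp_continuousOn (contOn_matrix h)

lemma contOn_adjugate {A : ℂ → Fin m → Fin m → ℂ} (h : ContinuousOn A s) (l j : Fin m) :
    ContinuousOn (fun z => (Matrix.of (A z)).adjugate l j) s :=
  ((continuous_apply j).comp
    ((continuous_apply l).comp (Continuous.matrix_adjugate continuous_id))).comp_continuousOn
    (contOn_matrix h)

lemma boundary_factor (Gf Hf : Fin m → Fin m → ℝ) (Φv : Fin m → Fin m → ℂ)
    (h : ∀ i j, Φv i j = (Gf i j : ℂ) + I * ((∑ l, Gf i l * Hf l j : ℝ) : ℂ)) :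
    Matrix.of Φv = (Matrix.of Gf).map (Complex.ofRealHom : ℝ →+* ℂ) *
      ((1 : Matrix (Fin m) (Fin m) ℂ) + I • (Matrix.of Hf).map (Complex.ofRealHom : ℝ →+* ℂ)) := by
  ext i j
  rw [Matrix.mul_apply, Matrix.of_apply, h i j]
  push_cast
  simp only [Matrix.add_apply, Matrix.smul_apply, Matrix.one_apply, Matrix.map_apply,
    Matrix.of_apply, smul_eq_mul, mul_add, Finset.sum_add_distrib, mul_ite, mul_one, mul_zero,
    Finset.sum_ite_eq', Finset.mem_univ, if_pos, ofRealHom_eq_coe]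
  rw [Finset.mul_sum]
  ring_nf

lemma map_inv_comm (B : Matrix (Fin m) (Fin m) ℝ) :
    (B.map (Complex.ofRealHom : ℝ →+* ℂ))⁻¹ = B⁻¹.map (Complex.ofRealHom : ℝ →+* ℂ) := by
  have h1 : B.map (Complex.ofRealHom : ℝ →+* ℂ) =
      (Complex.ofRealHom : ℝ →+* ℂ).mapMatrix B := rfl
  ext i j
  rw [Matrix.inv_def, Matrix.inv_def, Ring.inverse_eq_inv', Ring.inverse_eq_inv', h1,
    ← RingHom.map_adjugate, ← RingHom.map_det]
  simp [RingHom.mapMatrix_apply, Matrix.map_apply, Matrix.smul_apply, smul_eq_mul]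

end Aux

/-- let `G` and `G₀` be the `C^{1,δ}` solutions on the unit circle of the
fixed point equations `G = 1 − T₁[G·H]` and `G₀ = 1 − T₀[G₀·H]` (characterized by:
`G(1+iH)`, resp. `G₀(1+iH)`, extends holomorphically, `G(1) = 1`, resp. `G₀` has mean
`1`), the extension of `G(1+iH)` being nondegenerate on the closed disc.  Then there is
a constant matrix `C ∈ GL(m,ℝ)` with `G₀ = C·G` on the circle; moreover `G₀(1+iH)`
extends holomorphically to the disc, and
`T₀G₀ = G₀H − (1/2π)∫₀^{2π} G₀H dθ`. -/
theorem stmt_17 (m : ℕ) (hm : 0 < m) (δ : ℝ≥0) (hδ0 : 0 < δ) (hδ1 : (δ : ℝ) < 1)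
    (H G G₀ : ℂ → Fin m → Fin m → ℝ)
    (hH : C1HolderCircle δ H) (hG : C1HolderCircle δ G) (hG₀ : C1HolderCircle δ G₀)
    -- `G(1+iH)` extends holomorphically, with nondegenerate extension on the closed disc
    (hGext : ∃ Φ : ℂ → Fin m → Fin m → ℂ, ContinuousOn Φ (closedBall 0 1) ∧
      DifferentiableOn ℂ Φ (ball 0 1) ∧
      (∀ σ ∈ sphere (0:ℂ) 1, ∀ i j, Φ σ i j =
        (G σ i j : ℂ) + Complex.I * ((∑ l, G σ i l * H σ l j : ℝ) : ℂ)) ∧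
      ∀ z ∈ closedBall (0:ℂ) 1, (Matrix.of (Φ z)).det ≠ 0)
    -- normalization `G(1) = 1`
    (hG1 : ∀ i j, G 1 i j = if i = j then (1:ℝ) else 0)
    -- `G` is nondegenerate on the circle
    (hGinv : ∀ σ ∈ sphere (0:ℂ) 1, (Matrix.of (G σ)).det ≠ 0)
    -- `G₀(1+iH)` extends holomorphically
    (hG₀ext : ∃ Φ₀ : ℂ → Fin m → Fin m → ℂ, ContinuousOn Φ₀ (closedBall 0 1) ∧
      DifferentiableOn ℂ Φ₀ (ball 0 1) ∧
      ∀ σ ∈ sphere (0:ℂ) 1, ∀ i j, Φ₀ σ i j =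
        (G₀ σ i j : ℂ) + Complex.I * ((∑ l, G₀ σ i l * H σ l j : ℝ) : ℂ))
    -- normalization: `G₀` has mean the identity matrix
    (hG₀mean : ∀ i j, (1 / (2 * π)) * (∫ θ in (0:ℝ)..(2 * π),
        G₀ (Complex.exp (θ * Complex.I)) i j) = if i = j then (1:ℝ) else 0) :
    (∃ Cm : Fin m → Fin m → ℝ, (Matrix.of Cm).det ≠ 0 ∧
      ∀ σ ∈ sphere (0:ℂ) 1, ∀ i j, G₀ σ i j = ∑ l, Cm i l * G σ l j) ∧
    (∃ Φ₀ : ℂ → Fin m → Fin m → ℂ, ContinuousOn Φ₀ (closedBall 0 1) ∧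
      DifferentiableOn ℂ Φ₀ (ball 0 1) ∧
      ∀ σ ∈ sphere (0:ℂ) 1, ∀ i j, Φ₀ σ i j =
        (G₀ σ i j : ℂ) + Complex.I * ((∑ l, G₀ σ i l * H σ l j : ℝ) : ℂ)) ∧
    -- `T₀G₀ = G₀H − (1/2π)∫ G₀H dθ`: any zero-mean continuous real `t` with `G₀ + it`
    -- extending holomorphically equals `G₀H` minus its mean
    (∀ t : ℂ → Fin m → Fin m → ℝ,
      ContinuousOn t (sphere (0:ℂ) 1) →
      (∀ i j, (∫ θ in (0:ℝ)..(2 * π), t (Complex.exp (θ * Complex.I)) i j) = 0) →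
      (∃ Ψ : ℂ → Fin m → Fin m → ℂ, ContinuousOn Ψ (closedBall 0 1) ∧
        DifferentiableOn ℂ Ψ (ball 0 1) ∧
        ∀ σ ∈ sphere (0:ℂ) 1, ∀ i j, Ψ σ i j =
          (G₀ σ i j : ℂ) + Complex.I * (t σ i j : ℂ)) →
      ∀ σ ∈ sphere (0:ℂ) 1, ∀ i j,
        t σ i j = (∑ l, G₀ σ i l * H σ l j) -
          (1 / (2 * π)) * ∫ θ in (0:ℝ)..(2 * π),
            ∑ l, G₀ (Complex.exp (θ * Complex.I)) i l *
              H (Complex.exp (θ * Complex.I)) l j) := by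
  classical
  obtain ⟨Φ, hΦc, hΦd, hΦb, hΦdet⟩ := hGext
  obtain ⟨Φ₀, hΦ₀c, hΦ₀d, hΦ₀b⟩ := hG₀ext
  have hone : (1:ℂ) ∈ sphere (0:ℂ) 1 := by simp
  have hexpmem : ∀ θ : ℝ, Complex.exp (θ * Complex.I) ∈ sphere (0:ℂ) 1 := by
    intro θ
    rw [mem_sphere_iff_norm, sub_zero, Complex.norm_exp]
    simp
  -- the quotient matrix `N = Φ₀ Φ⁻¹`
  set N : ℂ → Fin m → Fin m → ℂ :=
    fun z i j => (Matrix.of (Φ₀ z) * (Matrix.of (Φ z))⁻¹) i j with hNdef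
  have hNapply : ∀ z (i j : Fin m), N z i j =
      ∑ l, Φ₀ z i l * (((Matrix.of (Φ z)).det)⁻¹ * (Matrix.of (Φ z)).adjugate l j) := by
    intro z i j
    simp only [hNdef, Matrix.mul_apply, Matrix.inv_def, Matrix.smul_apply, smul_eq_mul,
      Ring.inverse_eq_inv', Matrix.of_apply]
  have hNd : ∀ i j : Fin m, DifferentiableOn ℂ (fun z => N z i j) (ball 0 1) := by
    intro i j
    have he : (fun z => N z i j) = fun z =>
        ∑ l, Φ₀ z i l * (((Matrix.of (Φ z)).det)⁻¹ * (Matrix.of (Φ z)).adjugate l j) :=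
      funext fun z => hNapply z i j
    rw [he]
    refine DifferentiableOn.fun_sum fun l _ => (entryDiffOn hΦ₀d i l).mul
      (DifferentiableOn.mul ?_ (diffOn_adjugate hΦd l j))
    exact (diffOn_det hΦd).inv fun z hz => hΦdet z (ball_subset_closedBall hz)
  have hNc : ∀ i j : Fin m, ContinuousOn (fun z => N z i j) (closedBall 0 1) := by
    intro i j
    have he : (fun z => N z i j) = fun z =>
        ∑ l, Φ₀ z i l * (((Matrix.of (Φ z)).det)⁻¹ * (Matrix.of (Φ z)).adjugate l j) :=
      funext fun z => hNapply z i j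
    rw [he]
    refine continuousOn_finset_sum _ fun l _ => (entryContOn hΦ₀c i l).mul
      (ContinuousOn.mul ?_ (contOn_adjugate hΦc l j))
    exact (contOn_det hΦc).inv₀ fun z hz => hΦdet z hz
  -- the boundary factorizations
  have hfacG : ∀ σ ∈ sphere (0:ℂ) 1,
      Matrix.of (Φ σ) = (Matrix.of (G σ)).map (Complex.ofRealHom : ℝ →+* ℂ) *
        ((1 : Matrix (Fin m) (Fin m) ℂ) +
          I • (Matrix.of (H σ)).map (Complex.ofRealHom : ℝ →+* ℂ)) :=
    fun σ hσ => boundary_factor (G σ) (H σ) (Φ σ) (hΦb σ hσ)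
  have hfacG₀ : ∀ σ ∈ sphere (0:ℂ) 1,
      Matrix.of (Φ₀ σ) = (Matrix.of (G₀ σ)).map (Complex.ofRealHom : ℝ →+* ℂ) *
        ((1 : Matrix (Fin m) (Fin m) ℂ) +
          I • (Matrix.of (H σ)).map (Complex.ofRealHom : ℝ →+* ℂ)) :=
    fun σ hσ => boundary_factor (G₀ σ) (H σ) (Φ₀ σ) (hΦ₀b σ hσ)
  -- on the boundary, `N` is the (real) matrix `G₀ G⁻¹`
  have hNbd : ∀ σ ∈ sphere (0:ℂ) 1,
      Matrix.of (Φ₀ σ) * (Matrix.of (Φ σ))⁻¹ =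
        ((Matrix.of (G₀ σ)) * (Matrix.of (G σ))⁻¹).map (Complex.ofRealHom : ℝ →+* ℂ) := by
    intro σ hσ
    set P : Matrix (Fin m) (Fin m) ℂ := (1 : Matrix (Fin m) (Fin m) ℂ) +
      I • (Matrix.of (H σ)).map (Complex.ofRealHom : ℝ →+* ℂ) with hP
    have hPdet : IsUnit P.det := by
      have h1 : (Matrix.of (Φ σ)).det ≠ 0 := hΦdet σ (sphere_subset_closedBall hσ)
      rw [hfacG σ hσ, Matrix.det_mul] at h1
      exact isUnit_iff_ne_zero.mpr (right_ne_zero_of_mul h1)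
    rw [hfacG σ hσ, hfacG₀ σ hσ, Matrix.mul_inv_rev]
    rw [Matrix.map_mul]
    rw [mul_assoc, ← mul_assoc P, Matrix.mul_nonsing_inv _ hPdet, one_mul, map_inv_comm]
  have hNreal : ∀ σ ∈ sphere (0:ℂ) 1, ∀ i j : Fin m, (N σ i j).im = 0 := by
    intro σ hσ i j
    rw [hNdef]
    simp only [hNbd σ hσ, Matrix.map_apply, ofRealHom_eq_coe, Complex.ofReal_im]
  -- `N` is constant
  have hNconst : ∀ i j : Fin m, ∀ z ∈ closedBall (0:ℂ) 1, N z i j = N 1 i j := fun i j =>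
    constOfRealBoundary (hNc i j) (hNd i j) (fun σ hσ => hNreal σ hσ i j)
  -- the constant matrix
  set Cm : Fin m → Fin m → ℝ := fun i j => (N 1 i j).re with hCmdef
  have hCm : ∀ i j : Fin m, N 1 i j = ((Cm i j : ℝ) : ℂ) := by
    intro i j
    apply Complex.ext
    · simp [hCmdef]
    · simp [hNreal 1 hone i j]
  set Cc : Matrix (Fin m) (Fin m) ℂ := Matrix.of fun i j => N 1 i j with hCcdef
  -- the key relation on the boundary
  have hrel : ∀ σ ∈ sphere (0:ℂ) 1, ∀ i j : Fin m, G₀ σ i j = ∑ l, Cm i l * G σ l j := by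
    intro σ hσ i j
    have hu : IsUnit (Matrix.of (Φ σ)).det :=
      isUnit_iff_ne_zero.mpr (hΦdet σ (sphere_subset_closedBall hσ))
    have hNC : Matrix.of (Φ₀ σ) * (Matrix.of (Φ σ))⁻¹ = Cc := by
      ext a b
      exact hNconst a b σ (sphere_subset_closedBall hσ)
    have hfac : Matrix.of (Φ₀ σ) = Cc * Matrix.of (Φ σ) := by
      calc Matrix.of (Φ₀ σ) = Matrix.of (Φ₀ σ) * (Matrix.of (Φ σ))⁻¹ * Matrix.of (Φ σ) :=
            (Matrix.nonsing_inv_mul_cancel_right _ _ hu).symm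
        _ = Cc * Matrix.of (Φ σ) := by rw [hNC]
    -- cancel the factor `(1 + iH)`
    set P : Matrix (Fin m) (Fin m) ℂ := (1 : Matrix (Fin m) (Fin m) ℂ) +
      I • (Matrix.of (H σ)).map (Complex.ofRealHom : ℝ →+* ℂ) with hP
    have hPdet : IsUnit P.det := by
      have h1 : (Matrix.of (Φ σ)).det ≠ 0 := hΦdet σ (sphere_subset_closedBall hσ)
      rw [hfacG σ hσ, Matrix.det_mul] at h1
      exact isUnit_iff_ne_zero.mpr (right_ne_zero_of_mul h1)
    have hAB : (Matrix.of (G₀ σ)).map (Complex.ofRealHom : ℝ →+* ℂ) =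
        Cc * (Matrix.of (G σ)).map (Complex.ofRealHom : ℝ →+* ℂ) := by
      have h2 : (Matrix.of (G₀ σ)).map (Complex.ofRealHom : ℝ →+* ℂ) * P =
          Cc * ((Matrix.of (G σ)).map (Complex.ofRealHom : ℝ →+* ℂ) * P) := by
        rw [← hfacG σ hσ, ← hfacG₀ σ hσ]
        exact hfac
      calc (Matrix.of (G₀ σ)).map (Complex.ofRealHom : ℝ →+* ℂ)
          = (Matrix.of (G₀ σ)).map (Complex.ofRealHom : ℝ →+* ℂ) * P * P⁻¹ :=
            (Matrix.mul_nonsing_inv_cancel_right _ _ hPdet).symm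
        _ = Cc * ((Matrix.of (G σ)).map (Complex.ofRealHom : ℝ →+* ℂ) * P) * P⁻¹ := by rw [h2]
        _ = Cc * (Matrix.of (G σ)).map (Complex.ofRealHom : ℝ →+* ℂ) := by
            rw [mul_assoc Cc, Matrix.mul_nonsing_inv_cancel_right _ _ hPdet]
    have h3 : ((Matrix.of (G₀ σ)).map (Complex.ofRealHom : ℝ →+* ℂ)) i j =
        (Cc * (Matrix.of (G σ)).map (Complex.ofRealHom : ℝ →+* ℂ)) i j := by rw [hAB]
    simp only [Matrix.map_apply, Matrix.mul_apply, Matrix.of_apply, ofRealHom_eq_coe] at h3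
    have h4 : ((G₀ σ i j : ℝ) : ℂ) = ((∑ l, Cm i l * G σ l j : ℝ) : ℂ) := by
      rw [h3]
      push_cast
      refine Finset.sum_congr rfl fun l _ => ?_
      rw [show Cc i l = ((Cm i l : ℝ) : ℂ) from hCm i l]
    exact_mod_cast h4
  refine ⟨⟨Cm, ?_, hrel⟩, ⟨Φ₀, hΦ₀c, hΦ₀d, hΦ₀b⟩, ?_⟩
  · -- nondegeneracy of `Cm`, via the mean normalization of `G₀`
    have hGcont : ∀ l j : Fin m, Continuous fun θ : ℝ => G (Complex.exp (θ * Complex.I)) l j :=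
      fun l j => (continuous_apply j).comp ((continuous_apply l).comp hG.1.continuous)
    have hGint : ∀ l j : Fin m, IntervalIntegrable
        (fun θ : ℝ => G (Complex.exp (θ * Complex.I)) l j) MeasureTheory.volume 0 (2 * π) :=
      fun l j => (hGcont l j).intervalIntegrable _ _
    set Mr : Matrix (Fin m) (Fin m) ℝ := Matrix.of fun l j =>
      (1 / (2 * π)) * ∫ θ in (0:ℝ)..(2 * π), G (Complex.exp (θ * Complex.I)) l j with hMr
    have hId : (1 : Matrix (Fin m) (Fin m) ℝ) = Matrix.of Cm * Mr := by
      ext i j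
      rw [Matrix.one_apply, ← hG₀mean i j, Matrix.mul_apply]
      have hcong : (∫ θ in (0:ℝ)..(2 * π), G₀ (Complex.exp (θ * Complex.I)) i j) =
          ∫ θ in (0:ℝ)..(2 * π), ∑ l, Cm i l * G (Complex.exp (θ * Complex.I)) l j :=
        intervalIntegral.integral_congr fun θ _ => hrel _ (hexpmem θ) i j
      rw [hcong, intervalIntegral.integral_finset_sum
        (fun l _ => ((hGcont l j).intervalIntegrable _ _).const_mul (Cm i l))]
      simp only [intervalIntegral.integral_const_mul]
      rw [Finset.mul_sum]
      refine Finset.sum_congr rfl fun l _ => ?_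
      simp only [hMr, Matrix.of_apply]
      ring
    intro h0
    have hdet := congrArg Matrix.det hId
    rw [Matrix.det_one, Matrix.det_mul, h0, zero_mul] at hdet
    exact one_ne_zero hdet
  · -- uniqueness of the zero-mean conjugate function
    intro t htc htm hext σ hσ i j
    obtain ⟨Ψ, hΨc, hΨd, hΨb⟩ := hext
    set S : ℂ → ℝ := fun w => ∑ l, G₀ w i l * H w l j with hSdef
    set F : ℂ → ℂ := fun z => -I * (Ψ z i j - Φ₀ z i j) with hFdef
    have hFc : ContinuousOn F (closedBall 0 1) :=
      (continuousOn_const.mul ((entryContOn hΨc i j).sub (entryContOn hΦ₀c i j)))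
    have hFd : DifferentiableOn ℂ F (ball 0 1) :=
      ((entryDiffOn hΨd i j).sub (entryDiffOn hΦ₀d i j)).const_mul (-I)
    have hFbd : ∀ w ∈ sphere (0:ℂ) 1, F w = ((t w i j : ℝ) : ℂ) - ((S w : ℝ) : ℂ) := by
      intro w hw
      rw [hFdef]
      simp only [hΨb w hw i j, hΦ₀b w hw i j, hSdef]
      linear_combination (((S w : ℝ) : ℂ) - ((t w i j : ℝ) : ℂ)) * Complex.I_sq
    have hFim : ∀ w ∈ sphere (0:ℂ) 1, (F w).im = 0 := by
      intro w hw
      rw [hFbd w hw]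
      simp
    have hFconst := constOfRealBoundary hFc hFd hFim
    -- the constant value
    set c : ℝ := t 1 i j - S 1 with hc
    have hF1 : F 1 = ((c : ℝ) : ℂ) := by
      rw [hFbd 1 hone]
      push_cast [hc]
      ring
    have hcrel : ∀ w ∈ sphere (0:ℂ) 1, t w i j - S w = c := by
      intro w hw
      have := hFconst w (sphere_subset_closedBall hw)
      rw [hFbd w hw, hF1] at this
      exact_mod_cast this
    -- continuity and integrability
    have htcont : Continuous fun θ : ℝ => t (Complex.exp (θ * Complex.I)) i j := by
      have hexp : Continuous fun θ : ℝ => Complex.exp ((θ : ℂ) * Complex.I) :=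
        Complex.continuous_exp.comp (Complex.continuous_ofReal.mul continuous_const)
      exact (continuous_apply j).comp ((continuous_apply i).comp
        (htc.comp_continuous hexp fun θ => hexpmem θ))
    have hScont : Continuous fun θ : ℝ => S (Complex.exp (θ * Complex.I)) := by
      rw [hSdef]
      refine continuous_finset_sum _ fun l _ => Continuous.mul ?_ ?_
      · exact (continuous_apply l).comp ((continuous_apply i).comp hG₀.1.continuous)
      · exact (continuous_apply j).comp ((continuous_apply l).comp hH.1.continuous)
    have hSint : IntervalIntegrable (fun θ : ℝ => S (Complex.exp (θ * Complex.I)))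
        MeasureTheory.volume 0 (2 * π) := hScont.intervalIntegrable _ _
    have htint : IntervalIntegrable (fun θ : ℝ => t (Complex.exp (θ * Complex.I)) i j)
        MeasureTheory.volume 0 (2 * π) := htcont.intervalIntegrable _ _
    -- integrate the constant relation
    have hint1 : (∫ θ in (0:ℝ)..(2 * π),
        (t (Complex.exp (θ * Complex.I)) i j - S (Complex.exp (θ * Complex.I)))) =
        (2 * π - 0) • c := by
      rw [intervalIntegral.integral_congr (g := fun _ => c)
        (fun θ _ => hcrel _ (hexpmem θ))]
      exact intervalIntegral.integral_const c
    have hint2 : (∫ θ in (0:ℝ)..(2 * π),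
        (t (Complex.exp (θ * Complex.I)) i j - S (Complex.exp (θ * Complex.I)))) =
        - ∫ θ in (0:ℝ)..(2 * π), S (Complex.exp (θ * Complex.I)) := by
      rw [intervalIntegral.integral_sub htint hSint, htm i j, zero_sub]
    have hcval : c = -(1 / (2 * π)) * ∫ θ in (0:ℝ)..(2 * π),
        S (Complex.exp (θ * Complex.I)) := by
      have hπ : (2 * π : ℝ) ≠ 0 := by positivity
      have := hint1.symm.trans hint2
      rw [sub_zero, smul_eq_mul] at this
      field_simp
      linarith
    have hfinal := hcrel σ hσ
    have hSσ : S σ = ∑ l, G₀ σ i l * H σ l j := rfl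
    have hSθ : (∫ θ in (0:ℝ)..(2 * π), S (Complex.exp (θ * Complex.I))) =
        ∫ θ in (0:ℝ)..(2 * π), ∑ l, G₀ (Complex.exp (θ * Complex.I)) i l *
          H (Complex.exp (θ * Complex.I)) l j := rfl
    rw [← hSσ, ← hSθ]
    rw [hcval] at hfinal
    linarith
end
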